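/- Let M = {1^{m_1}, ..., n^{m_n}} with total size M = m_1 + ⋯ + m_n and k = M − n + 1. Then n! · [u^n] (A(x,y,u) − 1 + z)^k = Σ_{Π ∈ B_{n,k}} x^{des(Π)} y^{asc(Π)} z^{emp(Π)}, where B_{n,k} is the set of ordered set partitions of [n] into k possibly empty blocks, each block written as a permutation of its elements. -/

import Mathlib

open scoped Classical
open Finset MvPolynomial

/-- The word `w` padded with a `0` at the front and at the end; `pad w i` is the
`i`-th letter of `0, w_1, …, w_M, 0` (so `pad w 0 = 0 = pad w (M+1)`). -/
def pad (w : List ℕ) : ℕ → ℕ := fun i => (0 :: (w ++ [0])).getD i 0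

/-- number of descents (indices `0 ≤ i ≤ M` with `π_i > π_{i+1}`, convention `π_0 = π_{M+1} = 0`). -/
def desN (w : List ℕ) : ℕ :=
  ((Finset.range (w.length + 1)).filter fun i => pad w (i + 1) < pad w i).card

/-- number of ascents. -/
def ascN (w : List ℕ) : ℕ :=
  ((Finset.range (w.length + 1)).filter fun i => pad w i < pad w (i + 1)).card

/-- number of plateaus. -/
def platN (w : List ℕ) : ℕ :=
  ((Finset.range (w.length + 1)).filter fun i => pad w i = pad w (i + 1)).card

/-- number of double descents: indices `1 ≤ i ≤ M` with `π_{i-1} > π_i > π_{i+1}`. -/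
def ddN (w : List ℕ) : ℕ :=
  ((Finset.range w.length).filter fun i =>
    pad w (i + 1) < pad w i ∧ pad w (i + 2) < pad w (i + 1)).card

/-- number of cyclic descents: indices `1 ≤ i ≤ M` with `π_i > π_{i+1}`, cyclic convention
`π_{M+1} = π_1`. -/
def cdesN (w : List ℕ) : ℕ :=
  ((Finset.range w.length).filter fun i =>
    w.getD ((i + 1) % w.length) 0 < w.getD i 0).card

/-- number of cyclic ascents. -/
def cascN (w : List ℕ) : ℕ :=
  ((Finset.range w.length).filter fun i =>
    w.getD i 0 < w.getD ((i + 1) % w.length) 0).card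

/-- The permutations of `[n] = {1,…,n}`, as words (lists). -/
def Sn (n : ℕ) : Finset (List ℕ) := (List.range' 1 n).permutations.toFinset

/-- quasi-Stirling: no four positions `i<j<k<l` with `w_i = w_k`, `w_j = w_l`, `w_i ≠ w_j`
(no subword order-isomorphic to 1212 or 2121). -/
def IsQS (w : List ℕ) : Prop :=
  ¬ ∃ i j k l, i < j ∧ j < k ∧ k < l ∧ l < w.length ∧
      w.getD i 0 = w.getD k 0 ∧ w.getD j 0 = w.getD l 0 ∧ w.getD i 0 ≠ w.getD j 0

/-- The multiset `{1^{m 1}, …, n^{m n}}`, written as a (weakly increasing) list. -/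
def msetList (n : ℕ) (m : ℕ → ℕ) : List ℕ :=
  (List.range n).flatMap fun i => List.replicate (m (i + 1)) (i + 1)

/-- The finite set of quasi-Stirling multipermutations of `{1^{m 1}, …, n^{m n}}`. -/
noncomputable def QS (n : ℕ) (m : ℕ → ℕ) : Finset (List ℕ) :=
  (msetList n m).permutations.toFinset.filter IsQS

/-- `p` is a position of `w` holding a non-leftmost copy of its value. -/
def nonFirstPos (w : List ℕ) (p : ℕ) : Prop :=
  p < w.length ∧ ∃ q, q < p ∧ w.getD q 0 = w.getD p 0

/-- Rooted quasi-Stirling multipermutations: pairs `(π, r)` where `π` is quasi-Stirling and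
either `r = none` (rooted at `0`) or `r = some p` with `p` a position of a non-first copy. -/
noncomputable def RootedQS (n : ℕ) (m : ℕ → ℕ) : Finset (List ℕ × Option ℕ) :=
  ((QS n m) ×ˢ insert none ((Finset.range (msetList n m).length).image some)).filter
    fun P => ∀ r, P.2 = some r → nonFirstPos P.1 r

/-- Sum of the block sizes of the blocks preceding block `i`. -/
def offsetC {k : ℕ} (c : Fin k → ℕ) (i : Fin k) : ℕ :=
  ∑ j ∈ Finset.univ.filter (fun j : Fin k => (j : ℕ) < (i : ℕ)), c j

/-- The `i`-th block of the ordered set partition encoded by the word `w` together with the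
composition `c` of block sizes. -/
def blockOf (k : ℕ) (w : List ℕ) (c : Fin k → ℕ) (i : Fin k) : List ℕ :=
  (w.drop (offsetC c i)).take (c i)

/-- `B_{n,k}`: ordered set partitions of `[n]` into `k` possibly empty blocks, each block
written as a permutation of its elements; encoded as a pair `(w, c)` of a permutation word
`w` of `[n]` and a composition `c` of `n` into `k` nonnegative parts (the block sizes). -/
def Bnk (n k : ℕ) : Finset (List ℕ × (Fin k → ℕ)) :=
  Sn n ×ˢ Finset.Nat.antidiagonalTuple k n

/-- blockwise descent number of an ordered set partition. -/
def desB {k : ℕ} (P : List ℕ × (Fin k → ℕ)) : ℕ := ∑ i, desN (blockOf k P.1 P.2 i)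

/-- blockwise ascent number of an ordered set partition. -/
def ascB {k : ℕ} (P : List ℕ × (Fin k → ℕ)) : ℕ := ∑ i, ascN (blockOf k P.1 P.2 i)

/-- number of empty blocks of an ordered set partition. -/
def empB {k : ℕ} (P : List ℕ × (Fin k → ℕ)) : ℕ :=
  (Finset.univ.filter fun i => P.2 i = 0).card

/-- `A(x,y,u) = Σ_{n ≥ 0} A_n(x,y) uⁿ/n!`, power series in `u` with coefficients in
`ℚ[x,y,z] = MvPolynomial (Fin 3) ℚ` (`x = X 0`, `y = X 1`, `z = X 2`). -/
noncomputable def AEGF3 : PowerSeries (MvPolynomial (Fin 3) ℚ) :=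
  PowerSeries.mk fun j => (j.factorial : ℚ)⁻¹ •
    ∑ w ∈ Sn j, (X 0 : MvPolynomial (Fin 3) ℚ) ^ desN w * (X 1) ^ ascN w

/-- The global index of the `j`-th gap of block `i` (each block `i` has `c i + 1` gaps). -/
def gapIdx {k : ℕ} (c : Fin k → ℕ) (i : Fin k) (j : ℕ) : ℕ :=
  (∑ j' ∈ Finset.univ.filter (fun j' : Fin k => (j' : ℕ) < (i : ℕ)), (c j' + 1)) + j

/-- A bar placement `b` (bars per gap, `n + k` gaps in total) is good for the ordered set
partition `(w, c) ∈ B_{n,k}` if every descent gap of every block receives at least one bar. -/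
def GoodBars (n k : ℕ) (w : List ℕ) (c : Fin k → ℕ) (b : Fin (n + k) → ℕ) : Prop :=
  ∀ i : Fin k, ∀ j ≤ c i,
    pad (blockOf k w c i) (j + 1) < pad (blockOf k w c i) j →
      ∀ g : Fin (n + k), (g : ℕ) = gapIdx c i j → 1 ≤ b g

/-- `π_i` (1-indexed, `pad w i`) is the last copy of its value in `w`. -/
def lastCopy (w : List ℕ) (i : ℕ) : Prop :=
  ∀ j, i < j → j ≤ w.length → pad w j ≠ pad w i

/-- `π_p` is the first copy of its value; by convention the boundary entry `π_{M+1} = 0`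
is regarded as a second (non-first) copy of `0`. -/
def firstCopy (w : List ℕ) (p : ℕ) : Prop :=
  p ≤ w.length ∧ ∀ j, 1 ≤ j → j < p → pad w j ≠ pad w p

/-- sibling descent of type I at `i`: `π_{i+1}` is a first copy and `π_i > π_{i+1}`. -/
def TypeI (w : List ℕ) (i : ℕ) : Prop :=
  firstCopy w (i + 1) ∧ pad w (i + 1) < pad w i

/-- `i` is a sibling descent: `π_i` is a last copy, and either type I holds at `i` or
`π_{i+1}` is a non-first copy (type II). -/
def SDes (w : List ℕ) (i : ℕ) : Prop :=
  lastCopy w i ∧ (TypeI w i ∨ ¬ firstCopy w (i + 1))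

/-- number of sibling descents (indices `1 ≤ i ≤ M`). -/
noncomputable def sdN (w : List ℕ) : ℕ :=
  ((Finset.Icc 1 w.length).filter (SDes w)).card

/-- number of double sibling descents: indices `2 ≤ i ≤ M` such that both `i-1` and `i`
are sibling descents and `i-1` is of type I. -/
noncomputable def dsdN (w : List ℕ) : ℕ :=
  ((Finset.Icc 2 w.length).filter fun i =>
    SDes w (i - 1) ∧ SDes w i ∧ TypeI w (i - 1)).card

/-!
Expanding the `k`-th power, `n! · [uⁿ] (A - 1 + z)ᵏ` is a sum over compositions `c` of `n` into
`k` parts of `n! / ∏ cᵢ! · ∏ᵢ aᵢ`, where `aᵢ = A_{cᵢ}(x, y)`, or `z` when `cᵢ = 0`. For a fixed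
composition, cutting a permutation of `[n]` into consecutive blocks of sizes `cᵢ` and standardizing
each block is a `multinomial c`-to-one map onto `∏ᵢ S_{cᵢ}`, and it preserves blockwise descents
and ascents, because these only see the relative order of the letters of a block and of the
boundary letter `0`. So both sides agree composition by composition.
-/

section Words

lemma mem_Sn {n : ℕ} {w : List ℕ} : w ∈ Sn n ↔ w.Perm (List.range' 1 n) := by
  simp [Sn, List.mem_permutations]

lemma length_of_mem_Sn {n : ℕ} {w : List ℕ} (h : w ∈ Sn n) : w.length = n := by
  simpa using (mem_Sn.mp h).length_eq

lemma mem_Icc_of_mem_Sn {n : ℕ} {w : List ℕ} (h : w ∈ Sn n) {x : ℕ} (hx : x ∈ w) :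
    x ∈ Finset.Icc 1 n := by
  have := (mem_Sn.mp h).subset hx
  rw [List.mem_range'_1] at this
  rw [Finset.mem_Icc]; omega

lemma card_Sn (n : ℕ) : (Sn n).card = n.factorial := by
  rw [Sn, List.toFinset_card_of_nodup (List.nodup_permutations _ List.nodup_range'),
    List.length_permutations, List.length_range']

lemma mem_Sn_iff_nodup {n : ℕ} {w : List ℕ} :
    w ∈ Sn n ↔ w.Nodup ∧ w.toFinset = Finset.Icc 1 n := by
  rw [mem_Sn]
  have hIcc : (List.range' 1 n).toFinset = Finset.Icc 1 n := by
    ext x; simp only [List.mem_toFinset, List.mem_range'_1, Finset.mem_Icc]; omega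
  constructor
  · intro h
    exact ⟨h.nodup_iff.mpr List.nodup_range', by rw [List.toFinset_eq_of_perm _ _ h, hIcc]⟩
  · rintro ⟨hw, hset⟩
    exact List.perm_of_nodup_nodup_toFinset_eq hw List.nodup_range' (by rw [hset, hIcc])

lemma Sn_zero : Sn 0 = {[]} := by simp [Sn]

lemma pad_mem_cons (l : List ℕ) (i : ℕ) : pad l i ∈ 0 :: l := by
  unfold pad
  rcases lt_or_ge i (0 :: (l ++ [0])).length with h | h
  · rw [List.getD_eq_getElem _ _ h]
    have hm := List.getElem_mem h
    simp only [List.mem_cons, List.mem_append] at hm ⊢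
    tauto
  · rw [List.getD_eq_default _ _ h]; exact List.mem_cons_self

lemma pad_map {σ : ℕ → ℕ} (hσ : σ 0 = 0) (l : List ℕ) (i : ℕ) :
    pad (l.map σ) i = σ (pad l i) := by
  have h0 : (0 : ℕ) :: (l.map σ ++ [0]) = (0 :: (l ++ [0])).map σ := by simp [hσ]
  unfold pad
  rw [h0, List.getD_eq_getElem?_getD, List.getD_eq_getElem?_getD, List.getElem?_map]
  cases (0 :: (l ++ [0]))[i]? <;> simp [hσ]

lemma desN_map {σ : ℕ → ℕ} {l : List ℕ} (hσ : σ 0 = 0)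
    (hmono : StrictMonoOn σ {x | x ∈ 0 :: l}) : desN (l.map σ) = desN l := by
  unfold desN
  simp only [List.length_map, pad_map hσ,
    hmono.lt_iff_lt (pad_mem_cons l _) (pad_mem_cons l _)]

lemma ascN_map {σ : ℕ → ℕ} {l : List ℕ} (hσ : σ 0 = 0)
    (hmono : StrictMonoOn σ {x | x ∈ 0 :: l}) : ascN (l.map σ) = ascN l := by
  unfold ascN
  simp only [List.length_map, pad_map hσ,
    hmono.lt_iff_lt (pad_mem_cons l _) (pad_mem_cons l _)]

end Words

section NthSmallest

/-- `nthSmallest S j` is the `j`-th smallest element of `S`, counted from `1`; by convention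
`nthSmallest S 0 = 0`, so that relabelling by it keeps the boundary letter `0` of `pad`. -/
noncomputable def nthSmallest (S : Finset ℕ) (j : ℕ) : ℕ := (0 :: S.sort (· ≤ ·)).getD j 0

variable {S : Finset ℕ}

lemma nthSmallest_zero (S : Finset ℕ) : nthSmallest S 0 = 0 := rfl

lemma strictMonoOn_nthSmallest (hS : ∀ x ∈ S, 1 ≤ x) :
    StrictMonoOn (nthSmallest S) (Set.Iic S.card) := by
  have hsorted : (0 :: S.sort (· ≤ ·)).Pairwise (· < ·) := by
    refine List.pairwise_cons.mpr ⟨fun x hx => hS x ((Finset.mem_sort _).mp hx), ?_⟩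
    exact Finset.sortedLT_sort S |>.pairwise
  intro i hi j hj hij
  have hlen : (0 :: S.sort (· ≤ ·)).length = S.card + 1 := by simp
  simp only [Set.mem_Iic] at hi hj
  unfold nthSmallest
  rw [List.getD_eq_getElem _ _ (by omega), List.getD_eq_getElem _ _ (by omega)]
  exact List.pairwise_iff_getElem.mp hsorted i j (by omega) (by omega) hij

lemma map_nthSmallest_range' : (List.range' 1 S.card).map (nthSmallest S) = S.sort (· ≤ ·) := by
  apply List.ext_getElem (by simp)
  intro i h1 h2
  simp only [List.getElem_map, List.getElem_range', nthSmallest]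
  rw [List.getD_eq_getElem _ _ (by simp at h2 ⊢; omega)]
  simp [add_comm]

end NthSmallest

section Shuffle

variable {S : Finset ℕ}

lemma map_nthSmallest_perm {u : List ℕ} (hu : u ∈ Sn S.card) :
    (u.map (nthSmallest S)).Perm (S.sort (· ≤ ·)) := by
  simpa [map_nthSmallest_range'] using (mem_Sn.mp hu).map (nthSmallest S)

lemma strictMonoOn_nthSmallest_cons (hS : ∀ x ∈ S, 1 ≤ x) {u : List ℕ} (hu : u ∈ Sn S.card) :
    StrictMonoOn (nthSmallest S) {x | x ∈ 0 :: u} := by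
  refine (strictMonoOn_nthSmallest hS).mono fun x hx => ?_
  rcases List.mem_cons.mp hx with rfl | hx
  · exact Nat.zero_le _
  · exact (Finset.mem_Icc.mp (mem_Icc_of_mem_Sn hu hx)).2

lemma map_nthSmallest_injOn (hS : ∀ x ∈ S, 1 ≤ x) :
    Set.InjOn (List.map (nthSmallest S)) (Sn S.card) := by
  intro u hu u' hu' h
  have hinj := (strictMonoOn_nthSmallest hS).injOn
  apply List.ext_getElem (by rw [length_of_mem_Sn hu, length_of_mem_Sn hu'])
  intro i hi hi'
  have hmem : ∀ {w : List ℕ}, w ∈ Sn S.card → ∀ x ∈ w, x ∈ Set.Iic S.card :=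
    fun hw x hx => (Finset.mem_Icc.mp (mem_Icc_of_mem_Sn hw hx)).2
  refine hinj (hmem hu _ (List.getElem_mem hi)) (hmem hu' _ (List.getElem_mem hi')) ?_
  have := List.getElem_of_eq h (by simpa using hi)
  rwa [List.getElem_map, List.getElem_map] at this

def PatternInvariant {R : Type*} (F : List ℕ → R) : Prop :=
  ∀ (σ : ℕ → ℕ) (l : List ℕ), σ 0 = 0 → StrictMonoOn σ {x | x ∈ 0 :: l} → F (l.map σ) = F l

lemma PatternInvariant.map_nthSmallest {R : Type*} {F : List ℕ → R} (hF : PatternInvariant F)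
    (hS : ∀ x ∈ S, 1 ≤ x) {u : List ℕ} (hu : u ∈ Sn S.card) : F (u.map (nthSmallest S)) = F u :=
  hF _ _ (nthSmallest_zero S) (strictMonoOn_nthSmallest_cons hS hu)

noncomputable def shuffleWord (n : ℕ) (S : Finset ℕ) (u v : List ℕ) : List ℕ :=
  u.map (nthSmallest S) ++ v.map (nthSmallest (Finset.Icc 1 n \ S))

variable {n : ℕ} {u v : List ℕ}

lemma card_Icc_one_sdiff (hS : S ⊆ Finset.Icc 1 n) : (Finset.Icc 1 n \ S).card = n - S.card := by
  rw [Finset.card_sdiff_of_subset hS, Nat.card_Icc, Nat.add_sub_cancel]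

lemma one_le_of_subset_Icc {T : Finset ℕ} (hT : T ⊆ Finset.Icc 1 n) : ∀ x ∈ T, 1 ≤ x :=
  fun _ hx => (Finset.mem_Icc.mp (hT hx)).1

lemma shuffleWord_mem_Sn (hS : S ⊆ Finset.Icc 1 n) (hu : u ∈ Sn S.card)
    (hv : v ∈ Sn (n - S.card)) : shuffleWord n S u v ∈ Sn n := by
  rw [← card_Icc_one_sdiff hS] at hv
  have hperm := (map_nthSmallest_perm hu).append (map_nthSmallest_perm hv)
  rw [mem_Sn_iff_nodup, shuffleWord, hperm.nodup_iff, List.toFinset_eq_of_perm _ _ hperm,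
    List.toFinset_append, Finset.sort_toFinset, Finset.sort_toFinset,
    Finset.union_sdiff_of_subset hS, List.nodup_append]
  refine ⟨⟨Finset.sort_nodup _ _, Finset.sort_nodup _ _, ?_⟩, rfl⟩
  rintro x hx _ hy rfl
  rw [Finset.mem_sort] at hx hy
  exact (Finset.mem_sdiff.mp hy).2 hx

lemma take_shuffleWord (hu : u ∈ Sn S.card) :
    (shuffleWord n S u v).take S.card = u.map (nthSmallest S) :=
  List.take_left' (by rw [List.length_map, length_of_mem_Sn hu])

lemma drop_shuffleWord (hu : u ∈ Sn S.card) :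
    (shuffleWord n S u v).drop S.card = v.map (nthSmallest (Finset.Icc 1 n \ S)) :=
  List.drop_left' (by rw [List.length_map, length_of_mem_Sn hu])

lemma eq_of_shuffleWord_eq {S' : Finset ℕ} {u' v' : List ℕ}
    (hS : S ⊆ Finset.Icc 1 n) (hS' : S' ⊆ Finset.Icc 1 n) (hcard : S.card = S'.card)
    (hu : u ∈ Sn S.card) (hu' : u' ∈ Sn S'.card)
    (hv : v ∈ Sn (n - S.card)) (hv' : v' ∈ Sn (n - S'.card))
    (h : shuffleWord n S u v = shuffleWord n S' u' v') : S = S' ∧ u = u' ∧ v = v' := by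
  have htake := congrArg (List.take S.card) h
  have hdrop := congrArg (List.drop S.card) h
  rw [take_shuffleWord hu, hcard, take_shuffleWord hu'] at htake
  rw [drop_shuffleWord hu, hcard, drop_shuffleWord hu'] at hdrop
  have hSS' : S = S' := by
    rw [← Finset.sort_toFinset (s := S) (r := (· ≤ ·)),
      ← Finset.sort_toFinset (s := S') (r := (· ≤ ·)),
      ← List.toFinset_eq_of_perm _ _ (map_nthSmallest_perm hu),
      ← List.toFinset_eq_of_perm _ _ (map_nthSmallest_perm hu'), htake]
  subst hSS'
  rw [← card_Icc_one_sdiff hS] at hv hv'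
  exact ⟨rfl, map_nthSmallest_injOn (one_le_of_subset_Icc hS) hu hu' htake,
    map_nthSmallest_injOn (one_le_of_subset_Icc Finset.sdiff_subset) hv hv' hdrop⟩

end Shuffle

theorem sum_Sn_take_mul_drop {R : Type*} [NonUnitalNonAssocSemiring R] {n a : ℕ} (ha : a ≤ n)
    {F G : List ℕ → R} (hF : PatternInvariant F) (hG : PatternInvariant G) :
    ∑ w ∈ Sn n, F (w.take a) * G (w.drop a) =
      n.choose a • ((∑ u ∈ Sn a, F u) * ∑ v ∈ Sn (n - a), G v) := by
  set T := (Finset.Icc 1 n).powersetCard a ×ˢ (Sn a ×ˢ Sn (n - a))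
  let Φ : Finset ℕ × List ℕ × List ℕ → List ℕ := fun t => shuffleWord n t.1 t.2.1 t.2.2
  have memT {t} (ht : t ∈ T) :
      t.1 ⊆ Finset.Icc 1 n ∧ t.1.card = a ∧ t.2.1 ∈ Sn a ∧ t.2.2 ∈ Sn (n - a) := by
    simp only [T, Finset.mem_product, Finset.mem_powersetCard] at ht
    exact ⟨ht.1.1, ht.1.2, ht.2⟩
  have hinj : Set.InjOn Φ T := by
    rintro ⟨S, u, v⟩ ht ⟨S', u', v'⟩ ht' h
    obtain ⟨hS, hcard, hu, hv⟩ := memT ht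
    obtain ⟨hS', hcard', hu', hv'⟩ := memT ht'
    subst hcard
    obtain ⟨rfl, rfl, rfl⟩ := eq_of_shuffleWord_eq hS hS' hcard'.symm hu (hcard' ▸ hu') hv
      (hcard' ▸ hv') h
    rfl
  have himage : T.image Φ = Sn n := by
    refine Finset.eq_of_subset_of_card_le (Finset.image_subset_iff.mpr fun t ht => ?_) ?_
    · obtain ⟨hS, rfl, hu, hv⟩ := memT ht
      exact shuffleWord_mem_Sn hS hu hv
    · rw [Finset.card_image_of_injOn hinj, card_Sn, Finset.card_product, Finset.card_product,
        Finset.card_powersetCard, Nat.card_Icc, Nat.add_sub_cancel, card_Sn, card_Sn, ← mul_assoc,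
        Nat.choose_mul_factorial_mul_factorial ha]
  calc ∑ w ∈ Sn n, F (w.take a) * G (w.drop a)
      = ∑ t ∈ T, F ((Φ t).take a) * G ((Φ t).drop a) := by
        rw [← himage, Finset.sum_image hinj]
    _ = ∑ t ∈ T, F t.2.1 * G t.2.2 := by
        refine Finset.sum_congr rfl fun t ht => ?_
        obtain ⟨hS, rfl, hu, hv⟩ := memT ht
        rw [← card_Icc_one_sdiff hS] at hv
        simp only [Φ, take_shuffleWord hu, drop_shuffleWord hu,
          hF.map_nthSmallest (one_le_of_subset_Icc hS) hu,
          hG.map_nthSmallest (one_le_of_subset_Icc Finset.sdiff_subset) hv]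
    _ = n.choose a • ((∑ u ∈ Sn a, F u) * ∑ v ∈ Sn (n - a), G v) := by
        simp only [T, Finset.sum_product, Finset.sum_const, Finset.card_powersetCard,
          Nat.card_Icc, Nat.add_sub_cancel, Finset.sum_mul_sum]

section Blocks

lemma offsetC_zero {k : ℕ} (c : Fin (k + 1) → ℕ) : offsetC c 0 = 0 := by
  simp [offsetC]

lemma offsetC_succ {k : ℕ} (c : Fin (k + 1) → ℕ) (i : Fin k) :
    offsetC c i.succ = c 0 + offsetC (fun j => c j.succ) i := by
  simp only [offsetC, Finset.sum_filter, Fin.sum_univ_succ]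
  simp

lemma blockOf_zero {k : ℕ} (w : List ℕ) (c : Fin (k + 1) → ℕ) :
    blockOf (k + 1) w c 0 = w.take (c 0) := by
  rw [blockOf, offsetC_zero, List.drop_zero]

lemma blockOf_succ {k : ℕ} (w : List ℕ) (c : Fin (k + 1) → ℕ) (i : Fin k) :
    blockOf (k + 1) w c i.succ = blockOf k (w.drop (c 0)) (fun j => c j.succ) i := by
  rw [blockOf, blockOf, offsetC_succ, List.drop_drop]

lemma blockOf_map (σ : ℕ → ℕ) {k : ℕ} (w : List ℕ) (c : Fin k → ℕ) (i : Fin k) :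
    blockOf k (w.map σ) c i = (blockOf k w c i).map σ := by
  simp [blockOf, List.map_take, List.map_drop]

lemma PatternInvariant.prod_blockOf {R : Type*} [CommMonoid R] {F : List ℕ → R}
    (hF : PatternInvariant F) (k : ℕ) (c : Fin k → ℕ) :
    PatternInvariant fun w => ∏ i, F (blockOf k w c i) := by
  intro σ l hσ hmono
  refine Finset.prod_congr rfl fun i _ => ?_
  rw [blockOf_map]
  refine hF σ _ hσ (hmono.mono fun x hx => ?_)
  simp only [Set.mem_ofPred_eq, List.mem_cons] at hx ⊢
  exact hx.imp_right fun hx => List.drop_subset _ _ (List.take_subset _ _ hx)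

lemma Nat.multinomial_univ_fin_succ {k : ℕ} (c : Fin (k + 1) → ℕ) :
    Nat.multinomial Finset.univ c =
      (∑ i, c i).choose (c 0) * Nat.multinomial Finset.univ fun i : Fin k => c i.succ := by
  rw [Fin.univ_succ, Nat.multinomial_cons, Finset.sum_cons]
  simp [Nat.multinomial, Finset.prod_map, Finset.sum_map]

theorem sum_Sn_prod_blockOf {R : Type*} [CommSemiring R] {F : List ℕ → R}
    (hF : PatternInvariant F) {k : ℕ} (c : Fin k → ℕ) :
    ∑ w ∈ Sn (∑ i, c i), ∏ i, F (blockOf k w c i) =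
      Nat.multinomial Finset.univ c • ∏ i, ∑ u ∈ Sn (c i), F u := by
  induction k with
  | zero => simp [Sn_zero]
  | succ k ih =>
    have hsum : ∑ i, c i - c 0 = ∑ i : Fin k, c i.succ := by
      rw [Fin.sum_univ_succ, Nat.add_sub_cancel_left]
    calc ∑ w ∈ Sn (∑ i, c i), ∏ i, F (blockOf (k + 1) w c i)
        = ∑ w ∈ Sn (∑ i, c i),
            F (w.take (c 0)) * ∏ i : Fin k, F (blockOf k (w.drop (c 0)) (fun j => c j.succ) i) := by
          simp only [Fin.prod_univ_succ, blockOf_zero, blockOf_succ]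
      _ = (∑ i, c i).choose (c 0) • ((∑ u ∈ Sn (c 0), F u) *
            ∑ v ∈ Sn (∑ i : Fin k, c i.succ),
              ∏ i : Fin k, F (blockOf k v (fun j => c j.succ) i)) := by
          rw [sum_Sn_take_mul_drop (Finset.single_le_sum (by simp) (Finset.mem_univ 0)) hF
            (hF.prod_blockOf k _), hsum]
      _ = Nat.multinomial Finset.univ c • ∏ i, ∑ u ∈ Sn (c i), F u := by
          rw [ih, Nat.multinomial_univ_fin_succ, Fin.prod_univ_succ, mul_smul_comm, mul_smul]

end Blocks

lemma PowerSeries.coeff_pow_eq_sum_antidiagonalTuple {R : Type*} [CommSemiring R]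
    (φ : PowerSeries R) (k n : ℕ) :
    PowerSeries.coeff n (φ ^ k) =
      ∑ c ∈ Finset.Nat.antidiagonalTuple k n, ∏ i, PowerSeries.coeff (c i) φ := by
  rw [← Fin.prod_const, PowerSeries.coeff_prod]
  refine Finset.sum_nbij' (⇑) Finsupp.equivFunOnFinite.symm ?_ ?_ ?_ ?_ ?_ <;>
    simp [Finset.Nat.mem_antidiagonalTuple]

section Series

local notation "ℚ[x,y,z]" => MvPolynomial (Fin 3) ℚ

/-- `A_j(x, y)`. -/
noncomputable def desAscPoly (j : ℕ) : ℚ[x,y,z] :=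
  ∑ w ∈ Sn j, (X 0 : ℚ[x,y,z]) ^ desN w * X 1 ^ ascN w

lemma patternInvariant_desAsc :
    PatternInvariant fun w : List ℕ => (X 0 : ℚ[x,y,z]) ^ desN w * X 1 ^ ascN w :=
  fun _ _ hσ hmono => by simp only [desN_map hσ hmono, ascN_map hσ hmono]

lemma desAscPoly_zero : desAscPoly 0 = 1 := by
  simp [desAscPoly, Sn_zero, show desN [] = 0 from rfl, show ascN [] = 0 from rfl]

lemma coeff_AEGF3_sub_one_add_C (j : ℕ) :
    PowerSeries.coeff j (AEGF3 - 1 + PowerSeries.C (X 2 : ℚ[x,y,z])) =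
      (j.factorial : ℚ)⁻¹ • ((if j = 0 then X 2 else 1) * desAscPoly j) := by
  rw [map_add, map_sub, PowerSeries.coeff_C, AEGF3, PowerSeries.coeff_mk, PowerSeries.coeff_one]
  rcases eq_or_ne j 0 with rfl | hj
  · simp [← desAscPoly.eq_1, desAscPoly_zero]
  · simp [hj, desAscPoly]

end Series

theorem stmt7_general (n : ℕ) (k : ℕ) :
    (n.factorial : ℚ) •
        (PowerSeries.coeff (R := MvPolynomial (Fin 3) ℚ) n)
          ((AEGF3 - 1 + PowerSeries.C (R := MvPolynomial (Fin 3) ℚ) (X 2)) ^ k) =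
      ∑ P ∈ Bnk n k,
        (X 0 : MvPolynomial (Fin 3) ℚ) ^ desB P * (X 1) ^ ascB P * (X 2) ^ empB P := by
  rw [PowerSeries.coeff_pow_eq_sum_antidiagonalTuple, Finset.smul_sum, Bnk,
    Finset.sum_product_right]
  refine Finset.sum_congr rfl fun c hc => ?_
  obtain rfl : ∑ i, c i = n := Finset.Nat.mem_antidiagonalTuple.mp hc
  have hblocks (w : List ℕ) :
      (X 0 : MvPolynomial (Fin 3) ℚ) ^ desB (w, c) * X 1 ^ ascB (w, c) * X 2 ^ empB (w, c) =
        (∏ i, X 0 ^ desN (blockOf k w c i) * X 1 ^ ascN (blockOf k w c i)) *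
          ∏ i, if c i = 0 then X 2 else 1 := by
    rw [desB, ascB, empB, Finset.prod_ite, Finset.prod_const, Finset.prod_const_one, mul_one,
      ← Finset.prod_pow_eq_pow_sum, ← Finset.prod_pow_eq_pow_sum, ← Finset.prod_mul_distrib]
  have hmultinomial : ((∑ i, c i).factorial : ℚ) * ∏ i, ((c i).factorial : ℚ)⁻¹ =
      Nat.multinomial Finset.univ c := by
    rw [← Nat.multinomial_spec, Nat.cast_mul, Nat.cast_prod, Finset.prod_inv_distrib]
    field_simp
  simp only [coeff_AEGF3_sub_one_add_C, hblocks, ← Finset.sum_mul,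
    sum_Sn_prod_blockOf patternInvariant_desAsc, ← desAscPoly.eq_1]
  rw [Finset.prod_smul, Finset.prod_mul_distrib, smul_smul, hmultinomial, Nat.cast_smul_eq_nsmul,
    smul_mul_assoc, mul_comm]

/-- `n!·[uⁿ](A(x,y,u) − 1 + z)^k = Σ_{Π ∈ B_{n,k}} x^{des Π} y^{asc Π} z^{emp Π}`,
with `k = M − n + 1`. -/
theorem stmt7 (n : ℕ) (mlt : ℕ → ℕ) (hm : ∀ i, 1 ≤ i → i ≤ n → 1 ≤ mlt i)
    (k : ℕ) (hk : k = (∑ i ∈ Finset.range n, mlt (i + 1)) - n + 1) :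
    (n.factorial : ℚ) •
        (PowerSeries.coeff (R := MvPolynomial (Fin 3) ℚ) n)
          ((AEGF3 - 1 + PowerSeries.C (R := MvPolynomial (Fin 3) ℚ) (X 2)) ^ k) =
      ∑ P ∈ Bnk n k,
        (X 0 : MvPolynomial (Fin 3) ℚ) ^ desB P * (X 1) ^ ascB P * (X 2) ^ empB P :=
  stmt7_general n k
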